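/- Let ξ1, ξ2 > 0, n1, n2 ≥ 2, N = n1 + n2, w1 = ξ2/ξ1. Let k ∈ (0, π) and λ = (4/ξ2)·sin²(k/2). With ψ̃_j(λ) = ξ2^j · det(M_{1:j} − λ·I) for the top-left j × j principal submatrices, set A(k) = ψ̃_{n1}(λ) − w1·cos(k)·ψ̃_{n1−1}(λ) and B(k) = w1·ψ̃_{n1−1}(λ), and assume A(k) > 0. Define the phase φ2(k) = −n1·k + arctan(B(k)·sin(k)/A(k)). Then ξ2^N · det(M − λ·I) · sin(k) = √(A(k)² + B(k)²·sin²(k)) · sin((N+1)k + φ2(k)). -/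
import Mathlib


open Matrix Real

/-- The `(n1+n2) × (n1+n2)` two-segment tridiagonal matrix: row `i` (0-based) has
diagonal entry `2/ξ1` and nonzero off-diagonal entries `-1/ξ1` when `i < n1`, and
diagonal entry `2/ξ2` and nonzero off-diagonal entries `-1/ξ2` when `n1 ≤ i`. -/
noncomputable def twoSegMatrix (ξ1 ξ2 : ℝ) (n1 n2 : ℕ) :
    Matrix (Fin (n1 + n2)) (Fin (n1 + n2)) ℝ :=
  Matrix.of fun i j =>
    if (i : ℕ) = (j : ℕ) then 2 / (if (i : ℕ) < n1 then ξ1 else ξ2)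
    else if (i : ℕ) + 1 = (j : ℕ) ∨ (j : ℕ) + 1 = (i : ℕ) then
      -1 / (if (i : ℕ) < n1 then ξ1 else ξ2)
    else 0

/-- `ξ^j · det(A_{1:j} − λ·I)` where `A_{1:j}` is the top-left `j × j` principal
submatrix of `A` (returns `0` for out-of-range `j`). -/
noncomputable def psiTop {N : ℕ} (A : Matrix (Fin N) (Fin N) ℝ) (ξ lam : ℝ) (j : ℕ) : ℝ :=
  if h : j ≤ N then
    ξ ^ j *
      (A.submatrix (Fin.castLE h) (Fin.castLE h) -
        lam • (1 : Matrix (Fin j) (Fin j) ℝ)).det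
  else 0

/-! ### Auxiliary: generic tridiagonal determinants -/

noncomputable def triEnt (d e f : ℕ → ℝ) (i j : ℕ) : ℝ :=
  if i = j then d i else if i + 1 = j then e i else if j + 1 = i then f j else 0

noncomputable def triMat (d e f : ℕ → ℝ) (n : ℕ) : Matrix (Fin n) (Fin n) ℝ :=
  Matrix.of fun i j => triEnt d e f i j

noncomputable def triDet (d e f : ℕ → ℝ) : ℕ → ℝ
  | 0 => 1
  | 1 => d 0
  | (n+2) => d (n+1) * triDet d e f (n+1) - e n * f n * triDet d e f n

lemma cross_minor (d e f : ℕ → ℝ) (m : ℕ) :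
    ((triMat d e f (m+2)).submatrix (Fin.last (m+1)).succAbove
      (Fin.succAbove ⟨m, by omega⟩)).det
      = e m * (triMat d e f m).det := by
  have hsa : ∀ j : Fin (m+1),
      (((⟨m, by omega⟩ : Fin (m+2)).succAbove j : Fin (m+2)) : ℕ)
        = if (j:ℕ) < m then (j:ℕ) else (j:ℕ)+1 := by
    intro j
    rw [Fin.succAbove]
    split_ifs with h1 h2 h2
    · rfl
    · exact absurd (by simpa [Fin.lt_def] using h1) h2
    · exact absurd (by simpa [Fin.lt_def] using h2) h1
    · rfl
  set B := (triMat d e f (m+2)).submatrix (Fin.last (m+1)).succAbove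
      (Fin.succAbove ⟨m, by omega⟩) with hB
  have hBent : ∀ (i : Fin (m+1)) (j : Fin (m+1)),
      B i j = triEnt d e f i (if (j:ℕ) < m then (j:ℕ) else (j:ℕ)+1) := by
    intro i j
    rw [hB]
    simp only [Matrix.submatrix_apply, Fin.succAbove_last]
    show triEnt d e f _ _ = _
    rw [hsa j, Fin.coe_castSucc]
  rw [Matrix.det_succ_column B (Fin.last m)]
  rw [Finset.sum_eq_single (Fin.last m)]
  · have h1 : B (Fin.last m) (Fin.last m) = e m := by
      rw [hBent]
      simp only [Fin.val_last, if_neg (lt_irrefl m)]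
      simp [triEnt]
    rw [h1]
    have h2 : (B.submatrix (Fin.last m).succAbove (Fin.last m).succAbove) = triMat d e f m := by
      ext i j
      rw [Fin.succAbove_last, Matrix.submatrix_apply, hBent]
      have : ((Fin.castSucc j : Fin (m+1)) : ℕ) = (j:ℕ) := rfl
      rw [this, if_pos j.isLt]
      rfl
    rw [h2]
    simp [Fin.val_last]
  · intro i _ hi
    have hiv : (i:ℕ) ≠ m := fun h => hi (Fin.ext (by simpa using h))
    have : B i (Fin.last m) = 0 := by
      rw [hBent]
      simp only [Fin.val_last, if_neg (lt_irrefl m)]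
      have hb : (i:ℕ) < m + 1 := i.isLt
      simp only [triEnt]
      rw [if_neg (by omega), if_neg (by omega), if_neg (by omega)]
    rw [this]; ring
  · simp

lemma triMat_det (d e f : ℕ → ℝ) : ∀ n, (triMat d e f n).det = triDet d e f n := by
  have H : ∀ n, (triMat d e f n).det = triDet d e f n ∧
      (triMat d e f (n+1)).det = triDet d e f (n+1) := by
    intro n
    induction n with
    | zero =>
      constructor
      · simp [triDet, Matrix.det_fin_zero]
      · rw [show (triMat d e f 1).det = triMat d e f 1 0 0 from Matrix.det_fin_one _]
        simp [triMat, triEnt, triDet]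
    | succ m ih =>
      refine ⟨ih.2, ?_⟩
      rw [Matrix.det_succ_row (triMat d e f (m + 2)) (Fin.last (m + 1))]
      have hzero : ∀ j : Fin (m+2), j ≠ ⟨m, by omega⟩ → j ≠ Fin.last (m+1) →
          (-1:ℝ) ^ ((Fin.last (m+1) : ℕ) + j) * triMat d e f (m+2) (Fin.last (m+1)) j *
            (Matrix.submatrix (triMat d e f (m+2)) (Fin.last (m+1)).succAbove j.succAbove).det = 0 := by
        intro j h1 h2
        have hj1 : (j:ℕ) ≠ m := fun h => h1 (Fin.ext h)
        have hj2 : (j:ℕ) ≠ m + 1 := fun h => h2 (Fin.ext h)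
        have : triMat d e f (m+2) (Fin.last (m+1)) j = 0 := by
          show triEnt d e f _ _ = 0
          simp only [triEnt, Fin.val_last]
          have hb : (j : ℕ) < m + 2 := j.isLt
          rw [if_neg (by omega), if_neg (by omega), if_neg (by omega)]
        rw [this]; ring
      rw [Finset.sum_eq_add_of_mem (⟨m, by omega⟩ : Fin (m+2)) (Fin.last (m+1))
        (Finset.mem_univ _) (Finset.mem_univ _)
        (by intro h; exact absurd (congrArg Fin.val h) (by simp [Fin.val_last]))
        (fun j _ hj => hzero j (by tauto) (by tauto))]
      have hdiag : triMat d e f (m+2) (Fin.last (m+1)) (Fin.last (m+1)) = d (m+1) := by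
        show triEnt d e f _ _ = _
        simp [triEnt, Fin.val_last]
      have hsubdiag : triMat d e f (m+2) (Fin.last (m+1)) ⟨m, by omega⟩ = f m := by
        show triEnt d e f _ _ = _
        simp only [triEnt, Fin.val_last]
        rw [if_neg (by omega), if_neg (by omega)]
        simp
      have hmain : ((triMat d e f (m+2)).submatrix (Fin.last (m+1)).succAbove
          (Fin.last (m+1)).succAbove) = triMat d e f (m+1) := by
        ext i j
        rw [Fin.succAbove_last, Matrix.submatrix_apply]
        rfl
      rw [hdiag, hsubdiag, hmain, cross_minor, ih.1, ih.2]
      show _ = d (m+1) * triDet d e f (m+1) - e m * f m * triDet d e f m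
      simp only [Fin.val_last]
      ring_nf
      have h1 : ((-1:ℝ))^(m*2) = 1 := by
        rw [pow_mul]
        simp [sq, ← mul_pow]
      rw [h1]
      ring
  exact fun n => (H n).1

/-! ### Coefficients of the two-segment matrix -/

noncomputable def dcoef (ξ1 ξ2 lam : ℝ) (n1 i : ℕ) : ℝ := (if i < n1 then 2/ξ1 else 2/ξ2) - lam
noncomputable def ecoef (ξ1 ξ2 : ℝ) (n1 i : ℕ) : ℝ := -1 / (if i < n1 then ξ1 else ξ2)
noncomputable def fcoef (ξ1 ξ2 : ℝ) (n1 j : ℕ) : ℝ := -1 / (if j+1 < n1 then ξ1 else ξ2)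

lemma sub_eq_tri (ξ1 ξ2 lam : ℝ) (n1 n2 : ℕ) {j : ℕ} (h : j ≤ n1+n2) :
    (twoSegMatrix ξ1 ξ2 n1 n2).submatrix (Fin.castLE h) (Fin.castLE h)
        - lam • (1 : Matrix (Fin j) (Fin j) ℝ)
      = triMat (dcoef ξ1 ξ2 lam n1) (ecoef ξ1 ξ2 n1) (fcoef ξ1 ξ2 n1) j := by
  ext a b
  simp only [Matrix.sub_apply, Matrix.smul_apply, Matrix.submatrix_apply, twoSegMatrix,
    Matrix.of_apply, Fin.coe_castLE, smul_eq_mul, triMat, triEnt, Matrix.one_apply,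
    dcoef, ecoef, fcoef]
  by_cases hab : a = b
  · subst hab
    simp only [if_pos rfl]
    split_ifs <;> ring
  · have hab' : (a:ℕ) ≠ (b:ℕ) := fun hh => hab (Fin.ext hh)
    rw [if_neg hab', if_neg hab, if_neg hab']
    by_cases h1 : (a:ℕ)+1 = (b:ℕ)
    · rw [if_pos (Or.inl h1), if_pos h1]
      ring
    · rw [if_neg h1]
      by_cases h2 : (b:ℕ)+1 = (a:ℕ)
      · rw [if_pos (Or.inr h2), if_pos h2]
        simp only [h2]
        ring
      · rw [if_neg (by tauto), if_neg h2]
        ring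

/-! ### Solving the constant-coefficient recurrence -/

lemma rec_sol (k A B : ℝ) (u : ℕ → ℝ)
    (h0 : u 0 * Real.sin k = A * Real.sin k + B * Real.sin k * Real.cos k)
    (h1 : u 1 * Real.sin k = A * Real.sin (2*k) + B * Real.sin k * Real.cos (2*k))
    (hrec : ∀ m, u (m+2) = 2 * Real.cos k * u (m+1) - u m) :
    ∀ m : ℕ, u m * Real.sin k
      = A * Real.sin (((m:ℝ)+1)*k) + B * Real.sin k * Real.cos (((m:ℝ)+1)*k) := by
  have hs : ∀ x : ℝ, Real.sin (x+k) = 2*Real.cos k*Real.sin x - Real.sin (x-k) := by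
    intro x; rw [Real.sin_add, Real.sin_sub]; ring
  have hc : ∀ x : ℝ, Real.cos (x+k) = 2*Real.cos k*Real.cos x - Real.cos (x-k) := by
    intro x; rw [Real.cos_add, Real.cos_sub]; ring
  have H : ∀ m : ℕ,
      (u m * Real.sin k = A * Real.sin (((m:ℝ)+1)*k) + B * Real.sin k * Real.cos (((m:ℝ)+1)*k)) ∧
      (u (m+1) * Real.sin k
        = A * Real.sin (((m:ℝ)+2)*k) + B * Real.sin k * Real.cos (((m:ℝ)+2)*k)) := by
    intro m
    induction m with
    | zero =>
      constructor
      · norm_num; linarith [h0]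
      · norm_num; linarith [h1]
    | succ m ih =>
      obtain ⟨pm, pm1⟩ := ih
      constructor
      · push_cast; convert pm1 using 4 <;> push_cast <;> ring
      · have e2 := hrec m
        push_cast
        rw [show ((m:ℝ)+1+2)*k = (((m:ℝ)+2)*k)+k by ring, hs, hc,
          show (((m:ℝ)+2)*k) - k = ((m:ℝ)+1)*k by ring, e2]
        linear_combination 2*Real.cos k * pm1 - pm
  exact fun m => (H m).1

lemma phase_combine (A B s θ : ℝ) (hA : 0 < A) :
    A * Real.sin θ + B * s * Real.cos θ
      = Real.sqrt (A^2 + B^2 * s^2) * Real.sin (θ + Real.arctan (B * s / A)) := by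
  have hAne : A ≠ 0 := ne_of_gt hA
  rw [Real.sin_add, Real.sin_arctan, Real.cos_arctan]
  have h2 : A^2 + B^2*s^2 = A^2 * (1 + (B*s/A)^2) := by field_simp
  rw [h2, Real.sqrt_mul (sq_nonneg A), Real.sqrt_sq hA.le]
  have hpos : 0 < Real.sqrt (1 + (B*s/A)^2) := Real.sqrt_pos.2 (by positivity)
  field_simp

/-! ### Main auxiliary theorem -/

lemma main_aux (ξ1 ξ2 : ℝ) (hξ1 : 0 < ξ1) (hξ2 : 0 < ξ2)
    (n1 n2 : ℕ) (hn1 : 2 ≤ n1) (hn2 : 2 ≤ n2) (k : ℝ) (hk : k ∈ Set.Ioo 0 π)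
    (hA : 0 < psiTop (twoSegMatrix ξ1 ξ2 n1 n2) ξ2 ((4 / ξ2) * Real.sin (k / 2) ^ 2) n1 -
        (ξ2 / ξ1) * Real.cos k *
          psiTop (twoSegMatrix ξ1 ξ2 n1 n2) ξ2 ((4 / ξ2) * Real.sin (k / 2) ^ 2) (n1 - 1)) :
    ξ2 ^ (n1 + n2) *
        (twoSegMatrix ξ1 ξ2 n1 n2 - ((4 / ξ2) * Real.sin (k / 2) ^ 2) •
          (1 : Matrix (Fin (n1 + n2)) (Fin (n1 + n2)) ℝ)).det * Real.sin k =
      Real.sqrt ((psiTop (twoSegMatrix ξ1 ξ2 n1 n2) ξ2 ((4 / ξ2) * Real.sin (k / 2) ^ 2) n1 -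
            (ξ2 / ξ1) * Real.cos k *
              psiTop (twoSegMatrix ξ1 ξ2 n1 n2) ξ2 ((4 / ξ2) * Real.sin (k / 2) ^ 2) (n1 - 1)) ^ 2 +
          ((ξ2 / ξ1) *
              psiTop (twoSegMatrix ξ1 ξ2 n1 n2) ξ2 ((4 / ξ2) * Real.sin (k / 2) ^ 2) (n1 - 1)) ^ 2 *
            Real.sin k ^ 2) *
        Real.sin ((n1 + n2 + 1) * k +
          (-(n1 : ℝ) * k +
            Real.arctan (((ξ2 / ξ1) *
                psiTop (twoSegMatrix ξ1 ξ2 n1 n2) ξ2 ((4 / ξ2) * Real.sin (k / 2) ^ 2) (n1 - 1)) *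
              Real.sin k /
              (psiTop (twoSegMatrix ξ1 ξ2 n1 n2) ξ2 ((4 / ξ2) * Real.sin (k / 2) ^ 2) n1 -
                (ξ2 / ξ1) * Real.cos k *
                  psiTop (twoSegMatrix ξ1 ξ2 n1 n2) ξ2 ((4 / ξ2) * Real.sin (k / 2) ^ 2) (n1 - 1))))) := by
  obtain ⟨hk0, hkπ⟩ := hk
  have hs : 0 < Real.sin k := Real.sin_pos_of_pos_of_lt_pi hk0 hkπ
  have hξ1' : ξ1 ≠ 0 := ne_of_gt hξ1
  have hξ2' : ξ2 ≠ 0 := ne_of_gt hξ2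
  set lam := (4 / ξ2) * Real.sin (k / 2) ^ 2 with hlam
  set d := dcoef ξ1 ξ2 lam n1 with hd0
  set e := ecoef ξ1 ξ2 n1 with he0
  set f := fcoef ξ1 ξ2 n1 with hf0
  set q : ℕ → ℝ := fun j => ξ2 ^ j * triDet d e f j with hq
  have hψ : ∀ j, j ≤ n1 + n2 → psiTop (twoSegMatrix ξ1 ξ2 n1 n2) ξ2 lam j = q j := by
    intro j h
    rw [psiTop, dif_pos h, sub_eq_tri ξ1 ξ2 lam n1 n2 h, triMat_det]
  have hP1 : psiTop (twoSegMatrix ξ1 ξ2 n1 n2) ξ2 lam n1 = q n1 := hψ n1 (by omega)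
  have hP0 : psiTop (twoSegMatrix ξ1 ξ2 n1 n2) ξ2 lam (n1-1) = q (n1-1) := hψ _ (by omega)
  rw [hP1, hP0] at hA ⊢
  -- trig basics
  have hc2 := Real.cos_two_mul (k/2)
  rw [show 2*(k/2) = k by ring] at hc2
  have hss := Real.sin_sq_add_cos_sq (k/2)
  have hlam2 : lam = (2 - 2*Real.cos k)/ξ2 := by
    rw [hlam]
    field_simp
    nlinarith [hc2, hss]
  -- recurrences
  have hrec : ∀ j, n1 ≤ j → q (j+2) = 2*Real.cos k * q (j+1) - q j := by
    intro j hj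
    simp only [hq]
    rw [show triDet d e f (j+2)
        = d (j+1) * triDet d e f (j+1) - e j * f j * triDet d e f j from rfl]
    have hdv : d (j+1) = 2/ξ2 - lam := by
      rw [hd0, dcoef, if_neg (by omega)]
    have hev : e j = -1/ξ2 := by
      rw [he0, ecoef, if_neg (by omega)]
    have hfv : f j = -1/ξ2 := by
      rw [hf0, fcoef, if_neg (by omega)]
    rw [hdv, hev, hfv, hlam2]
    field_simp
    ring
  have hjunc : q (n1+1) = 2*Real.cos k * q n1 - (ξ2/ξ1) * q (n1-1) := by
    obtain ⟨a, rfl⟩ : ∃ a, n1 = a+2 := ⟨n1-2, by omega⟩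
    simp only [hq]
    rw [show a+2+1 = (a+1)+2 by omega]
    rw [show triDet d e f ((a+1)+2)
        = d (a+2) * triDet d e f (a+2) - e (a+1) * f (a+1) * triDet d e f (a+1) from rfl]
    have hdv : d (a+2) = 2/ξ2 - lam := by
      rw [hd0, dcoef, if_neg (by omega)]
    have hev : e (a+1) = -1/ξ1 := by
      rw [he0, ecoef, if_pos (by omega)]
    have hfv : f (a+1) = -1/ξ2 := by
      rw [hf0, fcoef, if_neg (by omega)]
    rw [show a+2-1 = a+1 from rfl, hdv, hev, hfv, hlam2]
    field_simp
    ring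
  -- solve the recurrence
  set Aq := q n1 - (ξ2/ξ1) * Real.cos k * q (n1-1) with hAq
  set Bq := (ξ2/ξ1) * q (n1-1) with hBq
  have key := rec_sol k Aq Bq (fun m => q (n1+m))
    (by
      show q (n1+0) * Real.sin k = _
      rw [show n1+0 = n1 from rfl, hAq, hBq]
      ring)
    (by
      show q (n1+1) * Real.sin k = _
      rw [hjunc, Real.sin_two_mul, Real.cos_two_mul, hAq, hBq]
      ring)
    (by
      intro m
      show q (n1+(m+2)) = 2 * Real.cos k * q (n1+(m+1)) - q (n1+m)
      rw [show n1+(m+2) = (n1+m)+2 by omega, show n1+(m+1) = (n1+m)+1 by omega]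
      exact hrec (n1+m) (by omega)) n2
  -- left-hand side
  have hdetN : (twoSegMatrix ξ1 ξ2 n1 n2 - lam • (1 : Matrix (Fin (n1+n2)) (Fin (n1+n2)) ℝ)).det
      = triDet d e f (n1+n2) := by
    have hid : (Fin.castLE (le_refl (n1+n2))) = (id : Fin (n1+n2) → Fin (n1+n2)) :=
      funext fun i => Fin.ext rfl
    have h1 : (twoSegMatrix ξ1 ξ2 n1 n2).submatrix (Fin.castLE (le_refl (n1+n2)))
        (Fin.castLE (le_refl (n1+n2))) = twoSegMatrix ξ1 ξ2 n1 n2 := by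
      rw [hid, Matrix.submatrix_id_id]
    rw [← triMat_det, ← sub_eq_tri ξ1 ξ2 lam n1 n2 (le_refl (n1+n2)), h1]
  have hLHS : ξ2 ^ (n1+n2) *
      (twoSegMatrix ξ1 ξ2 n1 n2 - lam • (1 : Matrix (Fin (n1+n2)) (Fin (n1+n2)) ℝ)).det
        * Real.sin k = q (n1+n2) * Real.sin k := by
    rw [hdetN]
  rw [hLHS, key]
  -- right-hand side
  have harg : ((n1:ℝ) + (n2:ℝ) + 1) * k + (-(n1:ℝ) * k + Real.arctan (Bq * Real.sin k / Aq))
      = (((n2:ℝ)+1)*k) + Real.arctan (Bq * Real.sin k / Aq) := by ring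
  rw [harg]
  exact phase_combine Aq Bq (Real.sin k) (((n2:ℝ)+1)*k) hA

theorem twoSeg_phase_formula (ξ1 ξ2 : ℝ) (hξ1 : 0 < ξ1) (hξ2 : 0 < ξ2)
    (n1 n2 : ℕ) (hn1 : 2 ≤ n1) (hn2 : 2 ≤ n2) (k : ℝ) (hk : k ∈ Set.Ioo 0 π)
    (hA : 0 < psiTop (twoSegMatrix ξ1 ξ2 n1 n2) ξ2 ((4 / ξ2) * Real.sin (k / 2) ^ 2) n1 -
        (ξ2 / ξ1) * Real.cos k *
          psiTop (twoSegMatrix ξ1 ξ2 n1 n2) ξ2 ((4 / ξ2) * Real.sin (k / 2) ^ 2) (n1 - 1)) :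
    let lam := (4 / ξ2) * Real.sin (k / 2) ^ 2
    let M := twoSegMatrix ξ1 ξ2 n1 n2
    let A := psiTop M ξ2 lam n1 - (ξ2 / ξ1) * Real.cos k * psiTop M ξ2 lam (n1 - 1)
    let B := (ξ2 / ξ1) * psiTop M ξ2 lam (n1 - 1)
    let φ2 := -(n1 : ℝ) * k + Real.arctan (B * Real.sin k / A)
    ξ2 ^ (n1 + n2) *
        (M - lam • (1 : Matrix (Fin (n1 + n2)) (Fin (n1 + n2)) ℝ)).det * Real.sin k =
      Real.sqrt (A ^ 2 + B ^ 2 * Real.sin k ^ 2) *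
        Real.sin ((n1 + n2 + 1) * k + φ2) := by
  exact main_aux ξ1 ξ2 hξ1 hξ2 n1 n2 hn1 hn2 k hk hA
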